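/- Let Q̄ ∈ Q_phy and define Q_{Q̄}(B) = M_{Q̄}^{(4)}:B − (I/3 + Q̄)(Q̄:B) for symmetric traceless B, where M_{Q̄}^{(4)} = ∫_{S²} mmmm f_{Q̄} dm is the fourth moment of the Bingham distribution with second moment Q̄. Then Q_{Q̄} is self-adjoint on symmetric traceless matrices: Q_{Q̄}(B₁):B₂ = Q_{Q̄}(B₂):B₁, and positive semidefinite: Q_{Q̄}(B):B ≥ 0. -/

import Mathlib

open MeasureTheory

noncomputable def sphereMeasure :
    Measure (Metric.sphere (0 : EuclideanSpace ℝ (Fin 3)) 1) :=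
  (volume : Measure (EuclideanSpace ℝ (Fin 3))).toSphere

noncomputable def quadForm (B : Matrix (Fin 3) (Fin 3) ℝ)
    (m : EuclideanSpace ℝ (Fin 3)) : ℝ :=
  ∑ i, ∑ j, B i j * m i * m j

/-- The Bingham probability density on the sphere associated with `B`. -/
noncomputable def binghamDensity (B : Matrix (Fin 3) (Fin 3) ℝ)
    (m : EuclideanSpace ℝ (Fin 3)) : ℝ :=
  Real.exp (quadForm B m) /
    ∫ m' : Metric.sphere (0 : EuclideanSpace ℝ (Fin 3)) 1,
      Real.exp (quadForm B m') ∂sphereMeasure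

/-- Fourth moment `M^{(4)}_{ijkl} = ∫ m_i m_j m_k m_l f_B dm` of the Bingham
distribution with field `B`. -/
noncomputable def M4 (B : Matrix (Fin 3) (Fin 3) ℝ) (i j k l : Fin 3) : ℝ :=
  ∫ m : Metric.sphere (0 : EuclideanSpace ℝ (Fin 3)) 1,
    (m : EuclideanSpace ℝ (Fin 3)) i * (m : EuclideanSpace ℝ (Fin 3)) j *
    (m : EuclideanSpace ℝ (Fin 3)) k * (m : EuclideanSpace ℝ (Fin 3)) l *
    binghamDensity B m ∂sphereMeasure

/-- Frobenius inner product of 3×3 matrices. -/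
def frob (A B : Matrix (Fin 3) (Fin 3) ℝ) : ℝ := ∑ i, ∑ j, A i j * B i j

/-- The operator `Q_{Q̄}(B) = M^{(4)}:B − (I/3 + Q̄)(Q̄:B)`. -/
noncomputable def calQ (Qbar Bbar B : Matrix (Fin 3) (Fin 3) ℝ) :
    Matrix (Fin 3) (Fin 3) ℝ :=
  Matrix.of fun i j =>
    (∑ k, ∑ l, M4 Bbar i j k l * B k l) -
      ((if i = j then (1 : ℝ) / 3 else 0) + Qbar i j) * frob Qbar B

/-!
Under the Bingham probability measure `ν = f_{B̄} dm`, each matrix `B` gives the random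
variable `X_B(m) = m·Bm`. Contracting `M⁽⁴⁾` with `B₁` and `B₂` gives `E[X_{B₁} X_{B₂}]`, and
when `B` is traceless the second-moment condition gives `Q̄:B = E[X_B]`. Hence `Q_{Q̄}(B₁):B₂`
is the covariance of `X_{B₁}` and `X_{B₂}`: it is symmetric, and `Q_{Q̄}(B):B` is a variance.
-/

open ProbabilityTheory

local notation "ℝ³" => EuclideanSpace ℝ (Fin 3)
local notation "S²" => Metric.sphere (0 : ℝ³) 1

section CompactSpace

variable {X : Type*} [TopologicalSpace X] [CompactSpace X] [MeasurableSpace X]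
  [OpensMeasurableSpace X] {f : X → ℝ} (ν : Measure X) [IsFiniteMeasure ν]

theorem Continuous.integrable_of_compactSpace (hf : Continuous f) : Integrable f ν :=
  hf.integrable_of_hasCompactSupport (.of_compactSpace f)

theorem Continuous.memLp_of_compactSpace (hf : Continuous f) (p : ENNReal) : MemLp f p ν :=
  hf.memLp_of_hasCompactSupport (.of_compactSpace f)

end CompactSpace

instance : IsFiniteMeasure sphereMeasure := by
  unfold sphereMeasure; infer_instance

instance : NeZero sphereMeasure :=
  ⟨Measure.toSphere_ne_zero _⟩

@[fun_prop]
theorem continuous_quadForm (B : Matrix (Fin 3) (Fin 3) ℝ) : Continuous (quadForm B) := by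
  unfold quadForm; fun_prop

noncomputable def binghamMeasure (B : Matrix (Fin 3) (Fin 3) ℝ) : Measure S² :=
  sphereMeasure.tilted fun m => quadForm B m

instance (B : Matrix (Fin 3) (Fin 3) ℝ) : IsProbabilityMeasure (binghamMeasure B) :=
  isProbabilityMeasure_tilted <| Continuous.integrable_of_compactSpace _ (by fun_prop)

theorem integral_mul_binghamDensity (B : Matrix (Fin 3) (Fin 3) ℝ) (g : S² → ℝ) :
    ∫ m, g m * binghamDensity B m ∂sphereMeasure = ∫ m, g m ∂binghamMeasure B := by
  simp only [binghamMeasure, integral_tilted, smul_eq_mul, binghamDensity, mul_comm]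

theorem M4_eq_integral (B : Matrix (Fin 3) (Fin 3) ℝ) (i j k l : Fin 3) :
    M4 B i j k l = ∫ m, (m : ℝ³) i * (m : ℝ³) j * (m : ℝ³) k * (m : ℝ³) l ∂binghamMeasure B :=
  integral_mul_binghamDensity B _

theorem integral_quadForm_mul (ν : Measure S²) [IsFiniteMeasure ν]
    (A : Matrix (Fin 3) (Fin 3) ℝ) {g : S² → ℝ} (hg : Continuous g) :
    ∫ m, quadForm A m * g m ∂ν = ∑ i, ∑ j, A i j * ∫ m, (m : ℝ³) i * (m : ℝ³) j * g m ∂ν := by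
  simp only [quadForm, Finset.sum_mul]
  rw [integral_finsetSum _ fun i _ => Continuous.integrable_of_compactSpace ν (by fun_prop)]
  refine Finset.sum_congr rfl fun i _ => ?_
  rw [integral_finsetSum _ fun j _ => Continuous.integrable_of_compactSpace ν (by fun_prop)]
  refine Finset.sum_congr rfl fun j _ => ?_
  rw [← integral_const_mul]
  exact integral_congr_ae (.of_forall fun m => by ring)

theorem sum_M4_contract_eq_integral (B A C : Matrix (Fin 3) (Fin 3) ℝ) :
    ∑ i, ∑ j, (∑ k, ∑ l, M4 B i j k l * A k l) * C i j =
      ∫ m, quadForm A m * quadForm C m ∂binghamMeasure B := by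
  have hM4A : ∀ i j, ∑ k, ∑ l, M4 B i j k l * A k l =
      ∫ m, quadForm A m * ((m : ℝ³) i * (m : ℝ³) j) ∂binghamMeasure B := by
    intro i j
    rw [integral_quadForm_mul _ _ (by fun_prop)]
    refine Finset.sum_congr rfl fun k _ => Finset.sum_congr rfl fun l _ => ?_
    rw [M4_eq_integral, mul_comm]
    congr 1
    exact integral_congr_ae (.of_forall fun m => by ring)
  simp_rw [hM4A, mul_comm _ (C _ _), mul_comm (quadForm A _)]
  rw [integral_quadForm_mul _ _ (by fun_prop)]

theorem integral_coord_mul_coord {Qbar Bbar : Matrix (Fin 3) (Fin 3) ℝ}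
    (hmom : ∀ i j, ∫ m, ((m : ℝ³) i * (m : ℝ³) j - if i = j then (1 : ℝ) / 3 else 0) *
      binghamDensity Bbar m ∂sphereMeasure = Qbar i j) (i j : Fin 3) :
    ∫ m, (m : ℝ³) i * (m : ℝ³) j ∂binghamMeasure Bbar = Qbar i j + if i = j then 1 / 3 else 0 := by
  rw [← hmom, integral_mul_binghamDensity,
    integral_sub (Continuous.integrable_of_compactSpace _ (by fun_prop)) (integrable_const _)]
  simp

section SecondMoment

variable {Qbar Bbar : Matrix (Fin 3) (Fin 3) ℝ}

theorem frob_eq_integral_quadForm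
    (hQ : ∀ i j, ∫ m, (m : ℝ³) i * (m : ℝ³) j ∂binghamMeasure Bbar =
      Qbar i j + if i = j then 1 / 3 else 0)
    {A : Matrix (Fin 3) (Fin 3) ℝ} (hA : A.trace = 0) :
    frob Qbar A = ∫ m, quadForm A m ∂binghamMeasure Bbar := by
  have h := integral_quadForm_mul (binghamMeasure Bbar) A continuous_const (g := fun _ => 1)
  simp only [mul_one, hQ] at h
  rw [h]
  simp only [Matrix.trace, Matrix.diag_apply, Fin.sum_univ_three, frob, one_div, ↓reduceIte,
    zero_ne_one, add_zero, Fin.reduceEq, one_ne_zero] at hA ⊢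
  linear_combination -hA / 3

theorem frob_calQ (A C : Matrix (Fin 3) (Fin 3) ℝ) :
    frob (calQ Qbar Bbar A) C = ∑ i, ∑ j, (∑ k, ∑ l, M4 Bbar i j k l * A k l) * C i j -
      (C.trace / 3 + frob Qbar C) * frob Qbar A := by
  simp only [frob, calQ, Matrix.of_apply, Matrix.trace, Matrix.diag, Fin.sum_univ_three,
    Fin.isValue, ↓reduceIte, one_div, zero_ne_one, zero_add, Fin.reduceEq, one_ne_zero]
  ring

theorem frob_calQ_eq_covariance
    (hQ : ∀ i j, ∫ m, (m : ℝ³) i * (m : ℝ³) j ∂binghamMeasure Bbar =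
      Qbar i j + if i = j then 1 / 3 else 0)
    {A C : Matrix (Fin 3) (Fin 3) ℝ} (hA : A.trace = 0) (hC : C.trace = 0) :
    frob (calQ Qbar Bbar A) C =
      cov[fun m : S² => quadForm A m, fun m : S² => quadForm C m; binghamMeasure Bbar] := by
  have hL2 (D : Matrix (Fin 3) (Fin 3) ℝ) :
      MemLp (fun m : S² => quadForm D m) 2 (binghamMeasure Bbar) :=
    Continuous.memLp_of_compactSpace _ (by fun_prop) 2
  rw [frob_calQ, sum_M4_contract_eq_integral, frob_eq_integral_quadForm hQ hA,
    frob_eq_integral_quadForm hQ hC, hC, covariance_eq_sub (hL2 A) (hL2 C)]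
  simp only [Pi.mul_apply, zero_div, zero_add]
  ring

end SecondMoment

theorem calQ_selfAdjoint_nonneg_general (Qbar Bbar : Matrix (Fin 3) (Fin 3) ℝ)
    (hmom : ∀ i j, (∫ m : Metric.sphere (0 : EuclideanSpace ℝ (Fin 3)) 1,
        ((m : EuclideanSpace ℝ (Fin 3)) i * (m : EuclideanSpace ℝ (Fin 3)) j -
          if i = j then (1 : ℝ) / 3 else 0) * binghamDensity Bbar m ∂sphereMeasure)
        = Qbar i j) :
    ∀ B₁ B₂ : Matrix (Fin 3) (Fin 3) ℝ,
      B₁.IsSymm → B₁.trace = 0 → B₂.IsSymm → B₂.trace = 0 →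
      frob (calQ Qbar Bbar B₁) B₂ = frob (calQ Qbar Bbar B₂) B₁ ∧
      0 ≤ frob (calQ Qbar Bbar B₁) B₁ := by
  intro B₁ B₂ _ hB₁ _ hB₂
  have hQ := integral_coord_mul_coord hmom
  refine ⟨?_, ?_⟩
  · rw [frob_calQ_eq_covariance hQ hB₁ hB₂, frob_calQ_eq_covariance hQ hB₂ hB₁,
      covariance_comm]
  · rw [frob_calQ_eq_covariance hQ hB₁ hB₁, covariance_self (by fun_prop)]
    exact variance_nonneg _ _

/-- For `Q̄ ∈ Q_phy` with Bingham field `B̄`, the linearized operator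
`Q_{Q̄}` is self-adjoint and positive semidefinite on symmetric traceless matrices. -/
theorem calQ_selfAdjoint_nonneg (Qbar Bbar : Matrix (Fin 3) (Fin 3) ℝ)
    (hB : Bbar.IsSymm) (hBtr : Bbar.trace = 0)
    (hQ : Qbar.IsHermitian) (hQtr : Qbar.trace = 0)
    (heig : ∀ i, hQ.eigenvalues i ∈ Set.Ioo (-(1 / 3) : ℝ) (2 / 3))
    (hmom : ∀ i j, (∫ m : Metric.sphere (0 : EuclideanSpace ℝ (Fin 3)) 1,
        ((m : EuclideanSpace ℝ (Fin 3)) i * (m : EuclideanSpace ℝ (Fin 3)) j -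
          if i = j then (1 : ℝ) / 3 else 0) * binghamDensity Bbar m ∂sphereMeasure)
        = Qbar i j) :
    ∀ B₁ B₂ : Matrix (Fin 3) (Fin 3) ℝ,
      B₁.IsSymm → B₁.trace = 0 → B₂.IsSymm → B₂.trace = 0 →
      frob (calQ Qbar Bbar B₁) B₂ = frob (calQ Qbar Bbar B₂) B₁ ∧
      0 ≤ frob (calQ Qbar Bbar B₁) B₁ :=
  calQ_selfAdjoint_nonneg_general Qbar Bbar hmom
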